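/- arXiv:2110.12901 — 6 statements merged into one kernel-verified Lean document; each statement's English description precedes it below -/
import Mathlib

section
/- Every sub-formula of a Horn-NC formula is itself a Horn-NC formula (the converse fails: there exist NC formulas that are not Horn-NC although all of their proper sub-formulas are Horn-NC). -/
/-- Regular non-clausal (NC) formulas over propositional variables `P` and
truth values `T`: positive literals `X^{≥α}`, negative literals `X_{≤α}`,
conjunctions and disjunctions of lists of NC formulas. -/
inductive NC (P T : Type) : Type where
  | pos : P → T → NC P T
  | neg : P → T → NC P T
  | conj : List (NC P T) → NC P T
  | disj : List (NC P T) → NC P T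

namespace NC

variable {P T : Type}

/-- `HasPos φ` : a positive literal occurs in `φ` (φ is "non-negative"). -/
inductive HasPos : NC P T → Prop where
  | pos (x : P) (a : T) : HasPos (pos x a)
  | conj {l : List (NC P T)} {φ : NC P T} : φ ∈ l → HasPos φ → HasPos (conj l)
  | disj {l : List (NC P T)} {φ : NC P T} : φ ∈ l → HasPos φ → HasPos (disj l)

/-- `IsNeg φ` : φ is a negative NC formula (every literal in it is negative). -/
inductive IsNeg : NC P T → Prop where
  | neg (x : P) (a : T) : IsNeg (neg x a)
  | conj {l : List (NC P T)} : (∀ φ ∈ l, IsNeg φ) → IsNeg (conj l)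
  | disj {l : List (NC P T)} : (∀ φ ∈ l, IsNeg φ) → IsNeg (disj l)

/-- `Subf ψ φ` : ψ is a sub-formula of φ. -/
inductive Subf : NC P T → NC P T → Prop where
  | refl (φ : NC P T) : Subf φ φ
  | conj {l : List (NC P T)} {φ ψ : NC P T} : φ ∈ l → Subf ψ φ → Subf ψ (conj l)
  | disj {l : List (NC P T)} {φ ψ : NC P T} : φ ∈ l → Subf ψ φ → Subf ψ (disj l)

/-- At most one member of `l` contains a positive literal. -/
def AtMostOnePos (l : List (NC P T)) : Prop :=
  ∀ i j : Fin l.length, HasPos (l.get i) → HasPos (l.get j) → i = j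

/-- `φ` is Horn-NC: every disjunction occurring in `φ` (including `φ` itself if
it is a disjunction) has at most one disjunct in which a positive literal occurs. -/
def HornNC (φ : NC P T) : Prop :=
  ∀ l : List (NC P T), Subf (disj l) φ → AtMostOnePos l

/-- Well-formedness: every conjunction and disjunction has `k ≥ 1` members. -/
inductive WF : NC P T → Prop where
  | pos (x : P) (a : T) : WF (pos x a)
  | neg (x : P) (a : T) : WF (neg x a)
  | conj {l : List (NC P T)} : l ≠ [] → (∀ φ ∈ l, WF φ) → WF (conj l)
  | disj {l : List (NC P T)} : l ≠ [] → (∀ φ ∈ l, WF φ) → WF (disj l)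

/-- The {0,1}-valued interpretation of an NC formula under `I : P → T`
(`true` = 1, `false` = 0): `I(X^{≥α}) = 1` iff `I(X) ≥ α`,
`I(X_{≤α}) = 1 − I(X^{≥α})`, disjunction = max, conjunction = min. -/
def eval [LinearOrder T] (I : P → T) : NC P T → Bool
  | pos x a => decide (a ≤ I x)
  | neg x a => !decide (a ≤ I x)
  | conj l => l.attach.all (fun ⟨φ, _⟩ => eval I φ)
  | disj l => l.attach.any (fun ⟨φ, _⟩ => eval I φ)
decreasing_by
  all_goals
    have h := List.sizeOf_lt_of_mem ‹_›
    simp only [NC.conj.sizeOf_spec, NC.disj.sizeOf_spec]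
    omega

end NC

/-- Regular literals, as atoms of clausal formulas. -/
inductive Lit (P T : Type) : Type where
  | pos : P → T → Lit P T
  | neg : P → T → Lit P T

namespace Lit

variable {P T : Type}

def isPos : Lit P T → Bool
  | pos _ _ => true
  | neg _ _ => false

def toNC : Lit P T → NC P T
  | pos x a => NC.pos x a
  | neg x a => NC.neg x a

def eval [LinearOrder T] (I : P → T) : Lit P T → Bool
  | pos x a => decide (a ≤ I x)
  | neg x a => !decide (a ≤ I x)

end Lit

/-- All clauses `(∨ C1 … Ck)` with `Ci` a clause of the `i`-th clause list. -/
def clProd {P T : Type} : List (List (List (Lit P T))) → List (List (Lit P T))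
  | [] => [[]]
  | cs :: rest => cs.flatMap (fun c => (clProd rest).map (fun tail => c ++ tail))

/-- The clausal form `cl(φ)` of an NC formula, obtained by exhaustively applying
the ∨/∧ distributivity laws (a clausal formula is a list of clauses; a clause
is a list of regular literals). -/
def NC.cl {P T : Type} : NC P T → List (List (Lit P T))
  | .pos x a => [[Lit.pos x a]]
  | .neg x a => [[Lit.neg x a]]
  | .conj l => (l.attach.map (fun ⟨φ, _⟩ => NC.cl φ)).flatten
  | .disj l => clProd (l.attach.map (fun ⟨φ, _⟩ => NC.cl φ))
decreasing_by
  all_goals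
    have h := List.sizeOf_lt_of_mem ‹_›
    simp only [NC.conj.sizeOf_spec, NC.disj.sizeOf_spec]
    omega

/-- A regular Horn clause: at most one positive literal. -/
def HornClause {P T : Type} (C : List (Lit P T)) : Prop := C.countP Lit.isPos ≤ 1

/-- A regular Horn (clausal) formula: a conjunction of Horn clauses (`𝓗`). -/
def HornClausal {P T : Type} (F : List (List (Lit P T))) : Prop := ∀ C ∈ F, HornClause C

/-- The {0,1}-valued interpretation of a clausal formula. -/
def evalClausal {P T : Type} [LinearOrder T] (I : P → T) (F : List (List (Lit P T))) : Bool :=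
  F.all (fun C => C.any (Lit.eval I))

/-- A clausal formula regarded as an NC formula. -/
def clausalToNC {P T : Type} (F : List (List (Lit P T))) : NC P T :=
  NC.conj (F.map (fun C => NC.disj (C.map Lit.toNC)))

theorem NC.Subf.trans' {P T : Type} {χ ψ φ : NC P T} (h1 : NC.Subf χ ψ)
    (h2 : NC.Subf ψ φ) : NC.Subf χ φ := by
  induction h2 with
  | refl => exact h1
  | conj hm _ ih => exact NC.Subf.conj hm (ih h1)
  | disj hm _ ih => exact NC.Subf.disj hm (ih h1)

/-- Every sub-formula of a Horn-NC formula is itself Horn-NC, and the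
converse fails: there is an NC formula that is not Horn-NC although all of its
proper sub-formulas are Horn-NC. -/
theorem stmt0 {P T : Type} [Countable P] [LinearOrder T] [Nonempty P] [Nonempty T] :
    (∀ φ ψ : NC P T, NC.HornNC φ → NC.Subf ψ φ → NC.HornNC ψ) ∧
    (∃ φ : NC P T, ¬ NC.HornNC φ ∧ ∀ ψ : NC P T, NC.Subf ψ φ → ψ ≠ φ → NC.HornNC ψ) := by
  constructor
  · intro φ ψ hφ hsub l hl
    exact hφ l (hl.trans' hsub)
  · obtain ⟨x⟩ := ‹Nonempty P›
    obtain ⟨a⟩ := ‹Nonempty T›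
    refine ⟨NC.disj [NC.pos x a, NC.pos x a], ?_, ?_⟩
    · intro h
      have := h [NC.pos x a, NC.pos x a] (NC.Subf.refl _)
        ⟨0, by simp⟩ ⟨1, by simp⟩ (NC.HasPos.pos x a) (NC.HasPos.pos x a)
      simp [Fin.ext_iff] at this
    · intro ψ hsub hne
      have hψ : ψ = NC.pos x a := by
        cases hsub with
        | refl => exact absurd rfl hne
        | disj hm hs =>
          simp at hm
          subst hm
          cases hs with
          | refl => rfl
      subst hψ
      intro l hl
      cases hl
end

section
/- A disjunction φ = (∨ φ1 … φk) of NC formulas with k ≥ 1 disjuncts is Horn-NC if and only if there exists an index i such that φi is Horn-NC and for every j ≠ i the disjunct φj is a negative NC formula. -/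
lemma isNeg_not_hasPos {P T : Type} {φ : NC P T} (hn : NC.IsNeg φ) :
    ¬ NC.HasPos φ := by
  intro hp
  induction hp with
  | pos x a => cases hn
  | conj hmem _ ih => cases hn with | conj h => exact ih (h _ hmem)
  | disj hmem _ ih => cases hn with | disj h => exact ih (h _ hmem)

lemma not_hasPos_isNeg {P T : Type} : ∀ (φ : NC P T), ¬ NC.HasPos φ → NC.IsNeg φ
  | .pos x a, h => absurd (NC.HasPos.pos x a) h
  | .neg x a, _ => .neg x a
  | .conj l, h => .conj (fun ψ hψ =>
      not_hasPos_isNeg ψ (fun hp => h (.conj hψ hp)))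
  | .disj l, h => .disj (fun ψ hψ =>
      not_hasPos_isNeg ψ (fun hp => h (.disj hψ hp)))
decreasing_by
  all_goals
    have h := List.sizeOf_lt_of_mem ‹_›
    simp only [NC.conj.sizeOf_spec, NC.disj.sizeOf_spec]
    omega

lemma isNeg_subf {P T : Type} {φ ψ : NC P T} (hs : NC.Subf ψ φ)
    (hn : NC.IsNeg φ) : NC.IsNeg ψ := by
  induction hs with
  | refl => exact hn
  | conj hmem _ ih => cases hn with | conj h => exact ih (h _ hmem)
  | disj hmem _ ih => cases hn with | disj h => exact ih (h _ hmem)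

lemma hornNC_of_mem {P T : Type} {l : List (NC P T)} {φ : NC P T}
    (h : NC.HornNC (NC.disj l)) (hmem : φ ∈ l) : NC.HornNC φ :=
  fun m hm => h m (.disj hmem hm)

/-- A disjunction (∨ φ1 … φk) with k ≥ 1 disjuncts is Horn-NC iff there is
an index i such that φi is Horn-NC and every other disjunct is a negative NC formula. -/
theorem stmt2 {P T : Type} [Countable P] [LinearOrder T]
    (l : List (NC P T)) (hk : l ≠ []) :
    NC.HornNC (NC.disj l) ↔
      ∃ i : Fin l.length, NC.HornNC (l.get i) ∧
        ∀ j : Fin l.length, j ≠ i → NC.IsNeg (l.get j) := by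
  constructor
  · intro h
    have hamo : NC.AtMostOnePos l := h l (.refl _)
    by_cases hex : ∃ i : Fin l.length, NC.HasPos (l.get i)
    · obtain ⟨i, hi⟩ := hex
      refine ⟨i, hornNC_of_mem h (l.get_mem i), fun j hj => ?_⟩
      refine not_hasPos_isNeg _ (fun hp => hj ?_)
      exact hamo j i hp hi
    · push_neg at hex
      have hlen : 0 < l.length := List.length_pos_iff.mpr hk
      exact ⟨⟨0, hlen⟩, hornNC_of_mem h (l.get_mem _),
        fun j _ => not_hasPos_isNeg _ (hex j)⟩
  · rintro ⟨i, hi, hneg⟩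
    intro m hm
    cases hm with
    | refl =>
      intro a b ha hb
      have hia : a = i := by
        by_contra hne
        exact isNeg_not_hasPos (hneg a hne) ha
      have hib : b = i := by
        by_contra hne
        exact isNeg_not_hasPos (hneg b hne) hb
      rw [hia, hib]
    | disj hmem hsub =>
      rename_i φ
      obtain ⟨n, hn⟩ := List.get_of_mem hmem
      by_cases hni : n = i
      · subst hni
        exact hi m (hn ▸ hsub)
      · have : NC.IsNeg (NC.disj m) := isNeg_subf (hn ▸ hsub) (hneg n hni)
        cases this with
        | disj hall =>
          intro a b ha _
          exact absurd ha (isNeg_not_hasPos (hall _ (m.get_mem a)))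
end

section
/- The inductively defined class \overline{𝓡𝓗} coincides exactly with the class 𝓡𝓗 of Horn-NC formulas: an NC formula belongs to \overline{𝓡𝓗} if and only if it is Horn-NC. -/
/-- The inductively defined class `\overline{𝓡𝓗}`: (1) every regular literal is in it;
(2) a conjunction (k ≥ 1) of its members is in it; (3) a disjunction (k ≥ 1) one of whose
disjuncts is in it and all of whose other disjuncts are negative NC formulas is in it. -/
inductive RHbar {P T : Type} : NC P T → Prop where
  | pos (x : P) (a : T) : RHbar (NC.pos x a)
  | neg (x : P) (a : T) : RHbar (NC.neg x a)
  | conj {l : List (NC P T)} : l ≠ [] → (∀ φ ∈ l, RHbar φ) → RHbar (NC.conj l)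
  | disj {l : List (NC P T)} (i : Fin l.length) : RHbar (l.get i) →
      (∀ j : Fin l.length, j ≠ i → NC.IsNeg (l.get j)) → RHbar (NC.disj l)

namespace NC

variable {P T : Type}

lemma isNeg_not_hasPos {φ : NC P T} (h : IsNeg φ) : ¬ HasPos φ := by
  induction h with
  | neg x a => intro hp; cases hp
  | conj h ih => intro hp; cases hp with
    | conj hm hpos => exact ih _ hm hpos
  | disj h ih => intro hp; cases hp with
    | disj hm hpos => exact ih _ hm hpos

lemma isNeg_of_not_hasPos : ∀ φ : NC P T, ¬ HasPos φ → IsNeg φ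
  | pos x a, h => absurd (HasPos.pos x a) h
  | neg x a, _ => IsNeg.neg x a
  | conj l, h => IsNeg.conj (fun ψ hm =>
      isNeg_of_not_hasPos ψ (fun hp => h (HasPos.conj hm hp)))
  | disj l, h => IsNeg.disj (fun ψ hm =>
      isNeg_of_not_hasPos ψ (fun hp => h (HasPos.disj hm hp)))
decreasing_by
  all_goals
    have h := List.sizeOf_lt_of_mem ‹_›
    simp only [NC.conj.sizeOf_spec, NC.disj.sizeOf_spec]
    omega

lemma isNeg_subf {φ ψ : NC P T} (h : Subf ψ φ) (hn : IsNeg φ) : IsNeg ψ := by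
  induction h with
  | refl => exact hn
  | conj hm _ ih => cases hn with | conj h' => exact ih (h' _ hm)
  | disj hm _ ih => cases hn with | disj h' => exact ih (h' _ hm)

lemma hornNC_of_isNeg {φ : NC P T} (h : IsNeg φ) : HornNC φ := by
  intro m hs
  have hm : IsNeg (disj m) := isNeg_subf hs h
  intro i j hi _
  exfalso
  cases hm with
  | disj h' => exact isNeg_not_hasPos (h' _ (List.get_mem m i)) hi

lemma hornNC_of_mem_conj {l : List (NC P T)} {φ : NC P T} (hm : φ ∈ l)
    (H : HornNC (conj l)) : HornNC φ := fun m hs => H m (Subf.conj hm hs)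

lemma hornNC_of_mem_disj {l : List (NC P T)} {φ : NC P T} (hm : φ ∈ l)
    (H : HornNC (disj l)) : HornNC φ := fun m hs => H m (Subf.disj hm hs)

lemma rhbar_hornNC {φ : NC P T} (h : RHbar φ) : HornNC φ := by
  induction h with
  | pos x a => intro m hs; cases hs
  | neg x a => intro m hs; cases hs
  | conj hne h ih =>
    intro m hs
    cases hs with
    | conj hm hsub => exact ih _ hm _ hsub
  | @disj l i hi hneg ih =>
    intro m hs
    cases hs with
    | refl =>
      have key : ∀ j : Fin l.length, HasPos (l.get j) → j = i := by
        intro j hp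
        by_contra hne
        exact isNeg_not_hasPos (hneg j hne) hp
      intro a b ha hb
      rw [key a ha, key b hb]
    | disj hm hsub =>
      rcases List.mem_iff_get.mp hm with ⟨j, rfl⟩
      by_cases hji : j = i
      · subst hji; exact ih _ hsub
      · exact hornNC_of_isNeg (isNeg_subf hsub (hneg j hji)) _ (Subf.refl _)

lemma hornNC_rhbar {φ : NC P T} (hwf : WF φ) : HornNC φ → RHbar φ := by
  induction hwf with
  | pos x a => intro _; exact RHbar.pos x a
  | neg x a => intro _; exact RHbar.neg x a
  | @conj l hne _ ih =>
    intro H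
    exact RHbar.conj hne (fun ψ hm => ih ψ hm (hornNC_of_mem_conj hm H))
  | @disj l hne hwfl ih =>
    intro H
    have amp : AtMostOnePos l := H l (Subf.refl _)
    by_cases hex : ∃ i : Fin l.length, HasPos (l.get i)
    · rcases hex with ⟨i, hi⟩
      refine RHbar.disj i (ih _ (List.get_mem l i) (hornNC_of_mem_disj (List.get_mem l i) H)) ?_
      intro j hji
      refine isNeg_of_not_hasPos _ (fun hp => hji (amp j i hp hi))
    · push_neg at hex
      have hpos : 0 < l.length := List.length_pos_iff.mpr hne
      refine RHbar.disj ⟨0, hpos⟩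
        (ih _ (List.get_mem l ⟨0, hpos⟩) (hornNC_of_mem_disj (List.get_mem l ⟨0, hpos⟩) H)) ?_
      intro j _
      exact isNeg_of_not_hasPos _ (hex j)

end NC

/-- `\overline{𝓡𝓗}` coincides with the class 𝓡𝓗 of Horn-NC formulas. -/
theorem stmt3 {P T : Type} [Countable P] [LinearOrder T]
    (φ : NC P T) (hwf : NC.WF φ) :
    RHbar φ ↔ NC.HornNC φ :=
  ⟨NC.rhbar_hornNC, NC.hornNC_rhbar hwf⟩
end

section
/- The clausal form of every Horn-NC formula is a regular Horn formula: for all NC formulas φ, if φ ∈ 𝓡𝓗 then cl(φ) ∈ 𝓗. -/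
section Aux
variable {P T : Type}

lemma of_mem_clProd : ∀ {css : List (List (List (Lit P T)))} {C : List (Lit P T)},
    C ∈ clProd css → ∃ parts, List.Forall₂ (· ∈ ·) parts css ∧ C = parts.flatten := by
  intro css
  induction css with
  | nil =>
    intro C hC
    simp [clProd] at hC
    exact ⟨[], .nil, by simp [hC]⟩
  | cons cs rest ih =>
    intro C hC
    simp only [clProd, List.mem_flatMap, List.mem_map] at hC
    obtain ⟨c, hc, tail, htail, rfl⟩ := hC
    obtain ⟨parts, hf, rfl⟩ := ih htail
    exact ⟨c :: parts, .cons hc hf, by simp⟩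

lemma forall₂_mem_left {α β : Type*} {R : α → β → Prop} :
    ∀ {as : List α} {bs : List β}, List.Forall₂ R as bs → ∀ a ∈ as, ∃ b ∈ bs, R a b := by
  intro as bs h
  induction h with
  | nil => simp
  | cons hr _ ih =>
    intro a ha
    rcases List.mem_cons.1 ha with rfl | ha
    · exact ⟨_, List.mem_cons_self, hr⟩
    · obtain ⟨b, hb, hab⟩ := ih a ha
      exact ⟨b, List.mem_cons_of_mem _ hb, hab⟩

lemma hornNC_mem_conj {l : List (NC P T)} (h : NC.HornNC (.conj l)) {ψ : NC P T}
    (hψ : ψ ∈ l) : NC.HornNC ψ :=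
  fun m hm => h m (.conj hψ hm)

lemma hornNC_mem_disj {l : List (NC P T)} (h : NC.HornNC (.disj l)) {ψ : NC P T}
    (hψ : ψ ∈ l) : NC.HornNC ψ :=
  fun m hm => h m (.disj hψ hm)

theorem haspos_of_cl : ∀ (φ : NC P T) (C : List (Lit P T)), C ∈ φ.cl →
    0 < C.countP Lit.isPos → φ.HasPos
  | .pos x a, C, hC, _ => by
    simp [NC.cl] at hC
    subst hC
    exact .pos x a
  | .neg x a, C, hC, hp => by
    simp [NC.cl] at hC
    subst hC
    simp [List.countP, List.countP.go, Lit.isPos] at hp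
  | .conj l, C, hC, hp => by
    simp only [NC.cl, List.mem_flatten, List.mem_map, List.mem_attach, true_and,
      Subtype.exists] at hC
    obtain ⟨F, ⟨ψ, hψ, rfl⟩, hCF⟩ := hC
    exact .conj hψ (haspos_of_cl ψ C hCF hp)
  | .disj l, C, hC, hp => by
    rw [NC.cl] at hC
    obtain ⟨parts, hf, rfl⟩ := of_mem_clProd hC
    rw [List.countP_flatten] at hp
    have hex : ∃ p ∈ parts, 0 < p.countP Lit.isPos := by
      by_contra hall
      push_neg at hall
      have : (parts.map (List.countP Lit.isPos)).sum = 0 := by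
        apply List.sum_eq_zero
        intro n hn
        obtain ⟨p, hp', rfl⟩ := List.mem_map.1 hn
        exact Nat.le_zero.1 (hall p hp')
      omega
    obtain ⟨p, hpmem, hppos⟩ := hex
    obtain ⟨cs, hcs, hpcs⟩ := forall₂_mem_left hf p hpmem
    simp only [List.mem_map, List.mem_attach, true_and, Subtype.exists] at hcs
    obtain ⟨ψ, hψ, rfl⟩ := hcs
    exact .disj hψ (haspos_of_cl ψ p hpcs hppos)
termination_by φ _ _ _ => sizeOf φ
decreasing_by
  all_goals
    have h := List.sizeOf_lt_of_mem hψ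
    simp only [NC.conj.sizeOf_spec, NC.disj.sizeOf_spec]
    omega

lemma sum_le_one : ∀ {ns : List ℕ}, (∀ i : Fin ns.length, ns.get i ≤ 1) →
    (∀ i j : Fin ns.length, 0 < ns.get i → 0 < ns.get j → i = j) → ns.sum ≤ 1 := by
  intro ns
  induction ns with
  | nil => simp
  | cons n ns ih =>
    intro h1 h2
    have hget : ∀ i : Fin ns.length, (n :: ns).get i.succ = ns.get i := fun i => rfl
    have h1' : ∀ i : Fin ns.length, ns.get i ≤ 1 := fun i => by
      have := h1 i.succ; rwa [hget] at this
    rcases Nat.eq_zero_or_pos n with rfl | hn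
    · simp only [List.sum_cons, Nat.zero_add]
      refine ih h1' (fun i j hi hj => ?_)
      have := h2 i.succ j.succ (by rwa [hget]) (by rwa [hget])
      exact Fin.succ_injective _ this
    · have z : Fin (n :: ns).length := ⟨0, Nat.succ_pos _⟩
      have hz : ns.sum = 0 := by
        apply List.sum_eq_zero
        intro m hm
        obtain ⟨i, hi⟩ := List.get_of_mem hm
        by_contra hm0
        have hipos : 0 < ns.get i := by rw [hi]; omega
        have heq := h2 ⟨0, Nat.succ_pos _⟩ i.succ hn (by rwa [hget])
        have := congrArg Fin.val heq
        simp [Fin.succ] at this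
      have hn1 := h1 ⟨0, Nat.succ_pos _⟩
      simp only [List.get] at hn1
      simp only [List.sum_cons, hz]
      omega

theorem hornClausal_of_hornNC :
    ∀ (φ : NC P T), NC.HornNC φ → ∀ C ∈ φ.cl, C.countP Lit.isPos ≤ 1
  | .pos x a, _, C, hC => by
    simp [NC.cl] at hC
    subst hC
    simp [List.countP_cons, Lit.isPos]
  | .neg x a, _, C, hC => by
    simp [NC.cl] at hC
    subst hC
    simp [List.countP_cons, Lit.isPos]
  | .conj l, h, C, hC => by
    simp only [NC.cl, List.mem_flatten, List.mem_map, List.mem_attach, true_and,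
      Subtype.exists] at hC
    obtain ⟨F, ⟨ψ, hψ, rfl⟩, hCF⟩ := hC
    exact hornClausal_of_hornNC ψ (hornNC_mem_conj h hψ) C hCF
  | .disj l, h, C, hC => by
    rw [NC.cl] at hC
    obtain ⟨parts, hf, rfl⟩ := of_mem_clProd hC
    rw [List.countP_flatten]
    have hlen : parts.length = l.length := by
      have := hf.length_eq; simpa using this
    have hamo := h l (.refl _)
    set ns := parts.map (List.countP Lit.isPos) with hns
    have hnslen : ns.length = parts.length := List.length_map _
    have hget : ∀ i : Fin ns.length,
        ns.get i = (parts.get (Fin.cast hnslen i)).countP Lit.isPos := by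
      intro i
      simp [hns]
    have hmemcl : ∀ i : Fin ns.length,
        parts.get (Fin.cast hnslen i) ∈ (l.get (Fin.cast (hnslen.trans hlen) i)).cl := by
      intro i
      have h2 : (i : ℕ) < (l.attach.map (fun x => NC.cl x.1)).length := by
        rw [← hf.length_eq, ← hnslen]; exact i.isLt
      have := hf.get (x := parts) (by rw [← hnslen]; exact i.isLt) h2
      simpa using this
    apply sum_le_one
    · intro i
      rw [hget]
      have hmem : l.get (Fin.cast (hnslen.trans hlen) i) ∈ l := List.get_mem l (Fin.cast (hnslen.trans hlen) i)
      exact hornClausal_of_hornNC _ (hornNC_mem_disj h hmem) _ (hmemcl i)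
    · intro i j hi hj
      rw [hget] at hi hj
      have hpi := haspos_of_cl _ _ (hmemcl i) hi
      have hpj := haspos_of_cl _ _ (hmemcl j) hj
      have heq := hamo _ _ hpi hpj
      have hv := congrArg Fin.val heq
      simp only [Fin.coe_cast] at hv
      exact Fin.ext hv
termination_by φ _ _ _ => sizeOf φ
decreasing_by
  all_goals first
  | (have h' := List.sizeOf_lt_of_mem hψ
     simp only [NC.conj.sizeOf_spec, NC.disj.sizeOf_spec]
     omega)
  | (have h' := List.sizeOf_lt_of_mem hmem
     simp only [NC.conj.sizeOf_spec, NC.disj.sizeOf_spec]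
     omega)

end Aux

/-- the clausal form of every Horn-NC formula is a regular Horn formula. -/
theorem stmt5 {P T : Type} [Countable P] [LinearOrder T]
    (φ : NC P T) (h : NC.HornNC φ) :
    HornClausal φ.cl :=
  hornClausal_of_hornNC φ h
end

section
/- Every Horn-NC formula is logically equivalent to some regular Horn formula: for all φ ∈ 𝓡𝓗 there exists H ∈ 𝓗 such that φ ≡ H. -/
namespace Stmt6Aux

variable {P T : Type}

theorem all_congr' {α : Type _} (l : List α) (p q : α → Bool) (h : ∀ x ∈ l, p x = q x) :
    l.all p = l.all q := by
  induction l with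
  | nil => rfl
  | cons a t ih => simp_all

theorem any_congr' {α : Type _} (l : List α) (p q : α → Bool) (h : ∀ x ∈ l, p x = q x) :
    l.any p = l.any q := by
  induction l with
  | nil => rfl
  | cons a t ih => simp_all

theorem attach_map_cl (l : List (NC P T)) :
    (l.attach.map (fun (x : {x // x ∈ l}) => NC.cl x.val)) = l.map NC.cl := by
  simp

theorem evalClausal_clProd [LinearOrder T] (I : P → T)
    (css : List (List (List (Lit P T)))) :
    evalClausal I (clProd css) = css.any (fun cs => evalClausal I cs) := by
  induction css with
  | nil => simp [clProd, evalClausal]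
  | cons cs rest ih =>
    rw [Bool.eq_iff_iff]
    constructor
    · intro h
      simp only [clProd, evalClausal, List.all_eq_true, List.mem_flatMap, List.mem_map] at h
      by_cases hc : ∀ c ∈ cs, c.any (Lit.eval I) = true
      · simp only [List.any_cons, Bool.or_eq_true]
        left
        simp only [evalClausal, List.all_eq_true]
        exact hc
      · push_neg at hc
        obtain ⟨c₀, hc₀, hne⟩ := hc
        have ht : ∀ t ∈ clProd rest, t.any (Lit.eval I) = true := by
          intro t htm
          have h2 := h (c₀ ++ t) ⟨c₀, hc₀, t, htm, rfl⟩
          simp only [List.any_append, Bool.or_eq_true] at h2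
          rcases h2 with h2 | h2
          · exact absurd h2 hne
          · exact h2
        have h3 : evalClausal I (clProd rest) = true := by
          simp only [evalClausal, List.all_eq_true]; exact ht
        rw [ih] at h3
        simp [List.any_cons, h3]
    · intro h
      simp only [List.any_cons, Bool.or_eq_true] at h
      simp only [clProd, evalClausal, List.all_eq_true, List.mem_flatMap, List.mem_map]
      rintro C ⟨c, hcm, t, htm, rfl⟩
      simp only [List.any_append, Bool.or_eq_true]
      rcases h with h | h
      · left
        simp only [evalClausal, List.all_eq_true] at h
        exact h c hcm
      · right
        rw [← ih] at h
        simp only [evalClausal, List.all_eq_true] at h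
        exact h t htm

theorem cl_conj (l : List (NC P T)) :
    NC.cl (NC.conj l) = (l.map NC.cl).flatten := by
  rw [NC.cl, attach_map_cl]

theorem cl_disj (l : List (NC P T)) :
    NC.cl (NC.disj l) = clProd (l.map NC.cl) := by
  rw [NC.cl, attach_map_cl]

theorem eval_cl [LinearOrder T] (I : P → T) :
    ∀ φ : NC P T, NC.eval I φ = evalClausal I (NC.cl φ)
  | .pos x a => by simp [NC.eval, NC.cl, evalClausal, Lit.eval]
  | .neg x a => by simp [NC.eval, NC.cl, evalClausal, Lit.eval]
  | .conj l => by
    have ih : ∀ ψ ∈ l, NC.eval I ψ = evalClausal I (NC.cl ψ) := fun ψ _ => eval_cl I ψ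
    rw [NC.eval, cl_conj, Bool.eq_iff_iff]
    simp only [evalClausal, List.all_eq_true, List.mem_attach, true_implies, Subtype.forall,
      List.mem_flatten, List.mem_map]
    constructor
    · rintro h C ⟨F, ⟨ψ, hm, rfl⟩, hCF⟩
      have h2 := h ψ hm
      rw [ih ψ hm] at h2
      simp only [evalClausal, List.all_eq_true] at h2
      exact h2 C hCF
    · intro h ψ hm
      rw [ih ψ hm]
      simp only [evalClausal, List.all_eq_true]
      exact fun C hC => h C ⟨NC.cl ψ, ⟨ψ, hm, rfl⟩, hC⟩
  | .disj l => by
    have ih : ∀ ψ ∈ l, NC.eval I ψ = evalClausal I (NC.cl ψ) := fun ψ _ => eval_cl I ψ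
    rw [NC.eval, cl_disj, evalClausal_clProd, Bool.eq_iff_iff]
    simp only [List.any_eq_true, List.mem_attach, true_and, Subtype.exists, exists_prop,
      List.mem_map]
    constructor
    · rintro ⟨ψ, hm, hψ⟩
      refine ⟨NC.cl ψ, ⟨ψ, hm, rfl⟩, ?_⟩
      rw [← ih ψ hm]; exact hψ
    · rintro ⟨cs, ⟨ψ, hm, rfl⟩, hcs⟩
      refine ⟨ψ, hm, ?_⟩
      rw [ih ψ hm]; exact hcs
decreasing_by
  all_goals
    have h := List.sizeOf_lt_of_mem ‹_›
    simp only [NC.conj.sizeOf_spec, NC.disj.sizeOf_spec]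
    omega

theorem clProd_zero (css : List (List (List (Lit P T))))
    (h : ∀ cs ∈ css, ∀ C ∈ cs, C.countP Lit.isPos = 0) :
    ∀ C ∈ clProd css, C.countP Lit.isPos = 0 := by
  induction css with
  | nil =>
    intro C hC
    simp only [clProd, List.mem_singleton] at hC
    subst hC; rfl
  | cons cs rest ih =>
    intro C hC
    simp only [clProd, List.mem_flatMap, List.mem_map] at hC
    obtain ⟨c, hcm, t, htm, rfl⟩ := hC
    rw [List.countP_append]
    rw [h cs List.mem_cons_self c hcm,
      ih (fun cs' h' => h cs' (List.mem_cons_of_mem _ h')) t htm]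

/-- At most one member list of `css` has clauses with positive literals. -/
inductive AlmostZero : List (List (List (Lit P T))) → Prop where
  | nil : AlmostZero []
  | cons_zero {cs rest} : (∀ C ∈ cs, C.countP Lit.isPos = 0) → AlmostZero rest →
      AlmostZero (cs :: rest)
  | cons_one {cs rest} : (∀ C ∈ cs, C.countP Lit.isPos ≤ 1) →
      (∀ cs' ∈ rest, ∀ C ∈ cs', C.countP Lit.isPos = 0) → AlmostZero (cs :: rest)

theorem clProd_almostZero {css : List (List (List (Lit P T)))} (h : AlmostZero css) :
    ∀ C ∈ clProd css, C.countP Lit.isPos ≤ 1 := by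
  induction h with
  | nil =>
    intro C hC
    simp only [clProd, List.mem_singleton] at hC
    subst hC; simp
  | cons_zero h0 _ ih =>
    intro C hC
    simp only [clProd, List.mem_flatMap, List.mem_map] at hC
    obtain ⟨c, hcm, t, htm, rfl⟩ := hC
    rw [List.countP_append, h0 c hcm]
    simpa using ih t htm
  | cons_one h1 h0 =>
    intro C hC
    simp only [clProd, List.mem_flatMap, List.mem_map] at hC
    obtain ⟨c, hcm, t, htm, rfl⟩ := hC
    rw [List.countP_append, clProd_zero _ h0 t htm]
    simpa using h1 c hcm

theorem countP_cl_zero : ∀ φ : NC P T, ¬ NC.HasPos φ →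
    ∀ C ∈ NC.cl φ, C.countP Lit.isPos = 0
  | .pos x a, h => absurd (NC.HasPos.pos x a) h
  | .neg x a, _ => by
    intro C hC
    simp only [NC.cl, List.mem_singleton] at hC
    subst hC
    simp [List.countP, List.countP.go, Lit.isPos]
  | .conj l, h => by
    intro C hC
    rw [cl_conj] at hC
    simp only [List.mem_flatten, List.mem_map] at hC
    obtain ⟨F, ⟨ψ, hm, rfl⟩, hCF⟩ := hC
    exact countP_cl_zero ψ (fun hp => h (NC.HasPos.conj hm hp)) C hCF
  | .disj l, h => by
    intro C hC
    rw [cl_disj] at hC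
    refine clProd_zero _ ?_ C hC
    intro cs hcs
    simp only [List.mem_map] at hcs
    obtain ⟨ψ, hm, rfl⟩ := hcs
    exact countP_cl_zero ψ (fun hp => h (NC.HasPos.disj hm hp))
decreasing_by
  all_goals
    have h := List.sizeOf_lt_of_mem hm
    simp only [NC.conj.sizeOf_spec, NC.disj.sizeOf_spec]
    omega

theorem atMostOnePos_tail {ψ : NC P T} {l : List (NC P T)}
    (h : NC.AtMostOnePos (ψ :: l)) : NC.AtMostOnePos l := by
  intro i j hi hj
  have h2 := h i.succ j.succ (by simpa using hi) (by simpa using hj)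
  exact Fin.succ_injective _ h2

theorem no_pos_tail {ψ : NC P T} {l : List (NC P T)}
    (h : NC.AtMostOnePos (ψ :: l)) (hp : NC.HasPos ψ) : ∀ ψ' ∈ l, ¬ NC.HasPos ψ' := by
  intro ψ' hm hp'
  obtain ⟨n, hn⟩ := List.get_of_mem hm
  have h3 : (ψ :: l).get n.succ = ψ' := by
    simp only [List.get_eq_getElem, Fin.val_succ, List.getElem_cons_succ]
    rw [← List.get_eq_getElem]; exact hn
  have h2 := h ⟨0, by simp⟩ n.succ (by simpa using hp) (by rw [h3]; exact hp')
  simp [Fin.ext_iff] at h2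

theorem almostZero_of_list (l : List (NC P T)) (hA : NC.AtMostOnePos l)
    (h1 : ∀ ψ ∈ l, ∀ C ∈ NC.cl ψ, C.countP Lit.isPos ≤ 1) :
    AlmostZero (l.map NC.cl) := by
  induction l with
  | nil => exact AlmostZero.nil
  | cons ψ l' ih =>
    rw [List.map_cons]
    by_cases hp : NC.HasPos ψ
    · refine AlmostZero.cons_one (h1 ψ List.mem_cons_self) ?_
      intro cs hcs
      simp only [List.mem_map] at hcs
      obtain ⟨ψ', hm, rfl⟩ := hcs
      exact countP_cl_zero ψ' (no_pos_tail hA hp ψ' hm)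
    · exact AlmostZero.cons_zero (countP_cl_zero ψ hp)
        (ih (atMostOnePos_tail hA) (fun ψ' hm => h1 ψ' (List.mem_cons_of_mem _ hm)))

theorem hornNC_mem_conj {l : List (NC P T)} (h : NC.HornNC (NC.conj l)) {ψ : NC P T}
    (hm : ψ ∈ l) : NC.HornNC ψ :=
  fun m hs => h m (NC.Subf.conj hm hs)

theorem hornNC_mem_disj {l : List (NC P T)} (h : NC.HornNC (NC.disj l)) {ψ : NC P T}
    (hm : ψ ∈ l) : NC.HornNC ψ :=
  fun m hs => h m (NC.Subf.disj hm hs)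

theorem horn_cl : ∀ φ : NC P T, NC.HornNC φ → ∀ C ∈ NC.cl φ, C.countP Lit.isPos ≤ 1
  | .pos x a, _ => by
    intro C hC
    simp only [NC.cl, List.mem_singleton] at hC
    subst hC
    simp [List.countP, List.countP.go, Lit.isPos]
  | .neg x a, _ => by
    intro C hC
    simp only [NC.cl, List.mem_singleton] at hC
    subst hC
    simp [List.countP, List.countP.go, Lit.isPos]
  | .conj l, h => by
    intro C hC
    rw [cl_conj] at hC
    simp only [List.mem_flatten, List.mem_map] at hC
    obtain ⟨F, ⟨ψ, hm, rfl⟩, hCF⟩ := hC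
    exact horn_cl ψ (hornNC_mem_conj h hm) C hCF
  | .disj l, h => by
    intro C hC
    rw [cl_disj] at hC
    refine clProd_almostZero ?_ C hC
    refine almostZero_of_list l (h l (NC.Subf.refl _)) ?_
    intro ψ hm
    exact horn_cl ψ (hornNC_mem_disj h hm)
decreasing_by
  all_goals
    have h := List.sizeOf_lt_of_mem hm
    simp only [NC.conj.sizeOf_spec, NC.disj.sizeOf_spec]
    omega

end Stmt6Aux


/-- every Horn-NC formula is logically equivalent to some regular Horn formula. -/
theorem stmt6 {P T : Type} [Countable P] [LinearOrder T]
    (φ : NC P T) (h : NC.HornNC φ) :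
    ∃ H : List (List (Lit P T)), HornClausal H ∧
      ∀ I : P → T, NC.eval I φ = evalClausal I H := by
  exact ⟨NC.cl φ, Stmt6Aux.horn_cl φ h, fun I => Stmt6Aux.eval_cl I φ⟩
end

section
/- The classes 𝓡𝓗 and 𝓗 are semantically equivalent: every Horn-NC formula is logically equivalent to some regular Horn formula, and every regular Horn formula is logically equivalent to some Horn-NC formula (indeed every regular Horn formula is itself Horn-NC). -/
-- ====== auxiliary lemmas ======
section Aux
variable {P T : Type}

theorem attach_map_cl (l : List (NC P T)) :
    l.attach.map (fun ⟨φ, _⟩ => NC.cl φ) = l.map NC.cl := by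
  simp

theorem cl_conj (l : List (NC P T)) : NC.cl (NC.conj l) = (l.map NC.cl).flatten := by
  rw [NC.cl, attach_map_cl]

theorem cl_disj (l : List (NC P T)) : NC.cl (NC.disj l) = clProd (l.map NC.cl) := by
  rw [NC.cl, attach_map_cl]

theorem clProd_zero (css : List (List (List (Lit P T))))
    (h : ∀ cs ∈ css, ∀ c ∈ cs, c.countP Lit.isPos = 0) :
    ∀ C ∈ clProd css, C.countP Lit.isPos = 0 := by
  induction css with
  | nil => intro C hC; simp [clProd] at hC; simp [hC]
  | cons cs rest ih =>
    intro C hC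
    simp only [clProd, List.mem_flatMap, List.mem_map] at hC
    obtain ⟨c, hc, t, ht, rfl⟩ := hC
    rw [List.countP_append, h cs (by simp) c hc,
      ih (fun cs' h' c' hc' => h cs' (by simp [h']) c' hc') t ht]

theorem noPos (φ : NC P T) (h : ¬ NC.HasPos φ) :
    ∀ C ∈ NC.cl φ, C.countP Lit.isPos = 0 := by
  match φ with
  | .pos x a => exact absurd (NC.HasPos.pos x a) h
  | .neg x a => intro C hC; simp [NC.cl] at hC; simp [hC, Lit.isPos]
  | .conj l =>
    intro C hC
    rw [cl_conj] at hC
    simp only [List.mem_flatten, List.mem_map] at hC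
    obtain ⟨_, ⟨ψ, hψ, rfl⟩, hC⟩ := hC
    exact noPos ψ (fun hp => h (NC.HasPos.conj hψ hp)) C hC
  | .disj l =>
    intro C hC
    rw [cl_disj] at hC
    refine clProd_zero _ ?_ C hC
    intro cs hcs c hc
    simp only [List.mem_map] at hcs
    obtain ⟨ψ, hψ, rfl⟩ := hcs
    exact noPos ψ (fun hp => h (NC.HasPos.disj hψ hp)) c hc
termination_by sizeOf φ
decreasing_by
  all_goals
    have h := List.sizeOf_lt_of_mem hψ
    simp only [NC.conj.sizeOf_spec, NC.disj.sizeOf_spec]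
    omega

theorem clProd_horn (css : List (List (List (Lit P T))))
    (h1 : ∀ cs ∈ css, ∀ c ∈ cs, c.countP Lit.isPos ≤ 1)
    (h2 : List.Pairwise (fun cs cs' => (∀ c ∈ cs, c.countP Lit.isPos = 0) ∨
      (∀ c ∈ cs', c.countP Lit.isPos = 0)) css) :
    ∀ C ∈ clProd css, C.countP Lit.isPos ≤ 1 := by
  induction css with
  | nil => intro C hC; simp [clProd] at hC; simp [hC]
  | cons cs rest ih =>
    intro C hC
    simp only [clProd, List.mem_flatMap, List.mem_map] at hC
    obtain ⟨c, hc, t, ht, rfl⟩ := hC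
    rw [List.pairwise_cons] at h2
    rw [List.countP_append]
    by_cases hz : ∀ c' ∈ cs, c'.countP Lit.isPos = 0
    · rw [hz c hc]
      simpa using ih (fun cs' h' => h1 cs' (by simp [h'])) h2.2 t ht
    · push_neg at hz
      have hrest : ∀ cs' ∈ rest, ∀ c' ∈ cs', c'.countP Lit.isPos = 0 := by
        intro cs' hcs'
        rcases h2.1 cs' hcs' with h | h
        · obtain ⟨c', hc', hne⟩ := hz; exact absurd (h c' hc') hne
        · exact h
      rw [clProd_zero rest hrest t ht]
      simpa using h1 cs (by simp) c hc

theorem countP_le_one_atMostOne {α : Type} (p : α → Bool) (C : List α)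
    (h : C.countP p ≤ 1) :
    ∀ i j : Fin C.length, p (C.get i) → p (C.get j) → i = j := by
  induction C with
  | nil => intro i; exact absurd i.2 (by simp)
  | cons a t ih =>
    intro i j hi hj
    have hcnt : (a :: t).countP p = t.countP p + (if p a then 1 else 0) := by
      simp [List.countP_cons]
    match i, j with
    | ⟨0, _⟩, ⟨0, _⟩ => rfl
    | ⟨0, _⟩, ⟨j+1, hj'⟩ =>
      exfalso
      have h2 : 0 < t.countP p :=
        List.countP_pos_iff.2 ⟨t.get ⟨j, by simpa using hj'⟩, List.get_mem _ _, hj⟩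
      simp only [List.get] at hi
      rw [hcnt, if_pos hi] at h
      omega
    | ⟨i+1, hi'⟩, ⟨0, _⟩ =>
      exfalso
      have h2 : 0 < t.countP p :=
        List.countP_pos_iff.2 ⟨t.get ⟨i, by simpa using hi'⟩, List.get_mem _ _, hi⟩
      simp only [List.get] at hj
      rw [hcnt, if_pos hj] at h
      omega
    | ⟨i+1, hi'⟩, ⟨j+1, hj'⟩ =>
      have := ih (by omega) ⟨i, by simpa using hi'⟩ ⟨j, by simpa using hj'⟩ hi hj
      have hij : i = j := by simpa [Fin.ext_iff] using this
      simp [Fin.ext_iff, hij]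

end Aux

section Aux2
variable {P T : Type}

theorem cl_horn (φ : NC P T) (h : NC.HornNC φ) : HornClausal (NC.cl φ) := by
  match φ with
  | .pos x a => intro C hC; simp [NC.cl] at hC; simp [hC, HornClause, Lit.isPos]
  | .neg x a => intro C hC; simp [NC.cl] at hC; simp [hC, HornClause, Lit.isPos]
  | .conj l =>
    intro C hC
    rw [cl_conj] at hC
    simp only [List.mem_flatten, List.mem_map] at hC
    obtain ⟨_, ⟨ψ, hψ, rfl⟩, hC⟩ := hC
    exact cl_horn ψ (fun m hm => h m (NC.Subf.conj hψ hm)) C hC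
  | .disj l =>
    intro C hC
    rw [cl_disj] at hC
    have hone : NC.AtMostOnePos l := h l (NC.Subf.refl _)
    refine clProd_horn _ ?_ ?_ C hC
    · intro cs hcs c hc
      simp only [List.mem_map] at hcs
      obtain ⟨ψ, hψ, rfl⟩ := hcs
      exact cl_horn ψ (fun m hm => h m (NC.Subf.disj hψ hm)) c hc
    · rw [List.pairwise_iff_get]
      intro i j hij
      have hi : (i:ℕ) < l.length := by simpa using i.2
      have hj : (j:ℕ) < l.length := by simpa using j.2
      have hgi : (l.map NC.cl).get i = NC.cl (l.get ⟨i, hi⟩) := by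
        simp [List.get_eq_getElem]
      have hgj : (l.map NC.cl).get j = NC.cl (l.get ⟨j, hj⟩) := by
        simp [List.get_eq_getElem]
      rw [hgi, hgj]
      by_cases hp : NC.HasPos (l.get ⟨i, hi⟩)
      · right
        intro c hc
        refine noPos _ (fun hq => ?_) c hc
        have := hone ⟨i, hi⟩ ⟨j, hj⟩ hp hq
        simp only [Fin.mk.injEq] at this
        omega
      · left
        exact noPos _ hp
termination_by sizeOf φ
decreasing_by
  all_goals
    have h := List.sizeOf_lt_of_mem hψ
    simp only [NC.conj.sizeOf_spec, NC.disj.sizeOf_spec]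
    omega

variable [LinearOrder T]

theorem eval_conj (I : P → T) (l : List (NC P T)) :
    NC.eval I (NC.conj l) = l.all (NC.eval I) := by
  rw [NC.eval, Bool.eq_iff_iff]
  simp [List.all_eq_true]

theorem eval_disj (I : P → T) (l : List (NC P T)) :
    NC.eval I (NC.disj l) = l.any (NC.eval I) := by
  rw [NC.eval, Bool.eq_iff_iff]
  simp [List.any_eq_true]

theorem eval_clProd (I : P → T) (css : List (List (List (Lit P T)))) :
    evalClausal I (clProd css) = css.any (evalClausal I) := by
  induction css with
  | nil => simp [clProd, evalClausal]
  | cons cs rest ih =>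
    rw [Bool.eq_iff_iff]
    simp only [clProd, evalClausal, List.any_cons, Bool.or_eq_true, List.all_eq_true,
      List.mem_flatMap, List.mem_map, ← ih] at *
    constructor
    · intro h
      by_cases hcs : ∀ c ∈ cs, c.any (Lit.eval I) = true
      · exact Or.inl hcs
      · push_neg at hcs
        obtain ⟨c, hc, hno⟩ := hcs
        right
        intro t ht
        have := h _ ⟨c, hc, t, ht, rfl⟩
        rw [List.any_append] at this
        simp only [Bool.or_eq_true] at this
        rcases this with h' | h'
        · exact absurd h' hno
        · exact h'
    · rintro (h | h) C ⟨c, hc, t, ht, rfl⟩ <;> rw [List.any_append]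
      · simp [h c hc]
      · simp [h t ht]

theorem eval_cl (I : P → T) (φ : NC P T) :
    NC.eval I φ = evalClausal I (NC.cl φ) := by
  match φ with
  | .pos x a => simp [NC.eval, NC.cl, evalClausal, Lit.eval]
  | .neg x a => simp [NC.eval, NC.cl, evalClausal, Lit.eval]
  | .conj l =>
    rw [eval_conj, cl_conj, Bool.eq_iff_iff]
    simp only [evalClausal, List.all_eq_true, List.mem_flatten, List.mem_map]
    constructor
    · rintro h C ⟨_, ⟨ψ, hψ, rfl⟩, hC⟩
      have h2 : evalClausal I (NC.cl ψ) = true := by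
        rw [← eval_cl I ψ]; exact h ψ hψ
      simp only [evalClausal, List.all_eq_true] at h2
      exact h2 C hC
    · intro h ψ hψ
      rw [eval_cl I ψ]
      simp only [evalClausal, List.all_eq_true]
      intro C hC
      exact h C ⟨_, ⟨ψ, hψ, rfl⟩, hC⟩
  | .disj l =>
    rw [eval_disj, cl_disj, eval_clProd, Bool.eq_iff_iff]
    simp only [List.any_eq_true, List.mem_map]
    constructor
    · rintro ⟨ψ, hψ, he⟩
      exact ⟨NC.cl ψ, ⟨ψ, hψ, rfl⟩, by rw [← eval_cl I ψ]; exact he⟩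
    · rintro ⟨_, ⟨ψ, hψ, rfl⟩, he⟩
      exact ⟨ψ, hψ, by rw [eval_cl I ψ]; exact he⟩
termination_by sizeOf φ
decreasing_by
  all_goals
    have h := List.sizeOf_lt_of_mem hψ
    simp only [NC.conj.sizeOf_spec, NC.disj.sizeOf_spec]
    omega

omit [LinearOrder T] in
theorem hasPos_toNC {lit : Lit P T} (h : NC.HasPos (Lit.toNC lit)) : lit.isPos = true := by
  cases lit with
  | pos x a => rfl
  | neg x a => exact absurd h (by intro h; cases h)

omit [LinearOrder T] in
theorem not_subf_disj_toNC (l : List (NC P T)) (lit : Lit P T) :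
    ¬ NC.Subf (NC.disj l) (Lit.toNC lit) := by
  cases lit <;> (intro h; cases h)

theorem eval_toNC (I : P → T) (lit : Lit P T) :
    NC.eval I (Lit.toNC lit) = Lit.eval I lit := by
  cases lit <;> simp [Lit.toNC, Lit.eval, NC.eval]

omit [LinearOrder T] in
theorem hornNC_clausalToNC (H : List (List (Lit P T))) (h : HornClausal H) :
    NC.HornNC (clausalToNC H) := by
  intro l hsub
  cases hsub with
  | conj hmem hsub' =>
    simp only [List.mem_map] at hmem
    obtain ⟨C, hC, rfl⟩ := hmem
    cases hsub' with
    | refl =>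
      intro i j hi hj
      have hlen : (C.map Lit.toNC).length = C.length := List.length_map _
      have hi' : (i:ℕ) < C.length := by omega
      have hj' : (j:ℕ) < C.length := by omega
      have gi : (C.map Lit.toNC).get i = Lit.toNC (C.get ⟨i, hi'⟩) := by
        simp [List.get_eq_getElem]
      have gj : (C.map Lit.toNC).get j = Lit.toNC (C.get ⟨j, hj'⟩) := by
        simp [List.get_eq_getElem]
      rw [gi] at hi; rw [gj] at hj
      have := countP_le_one_atMostOne Lit.isPos C (h C hC) ⟨i, hi'⟩ ⟨j, hj'⟩
        (hasPos_toNC hi) (hasPos_toNC hj)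
      simp only [Fin.mk.injEq] at this
      exact Fin.ext this
    | disj hmem' hsub'' =>
      simp only [List.mem_map] at hmem'
      obtain ⟨lit, _, rfl⟩ := hmem'
      exact absurd hsub'' (not_subf_disj_toNC _ _)

theorem eval_clausalToNC (I : P → T) (H : List (List (Lit P T))) :
    NC.eval I (clausalToNC H) = evalClausal I H := by
  rw [clausalToNC, eval_conj, Bool.eq_iff_iff]
  simp only [evalClausal, List.all_eq_true, List.mem_map, forall_exists_index, and_imp]
  constructor
  · intro h C hC
    have h2 := h _ C hC rfl
    rw [eval_disj] at h2
    simp only [List.any_eq_true, List.mem_map] at h2 ⊢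
    obtain ⟨_, ⟨lit, hlit, rfl⟩, he⟩ := h2
    exact ⟨lit, hlit, by rw [← eval_toNC]; exact he⟩
  · rintro h ψ C hC rfl
    rw [eval_disj]
    have h2 := h C hC
    simp only [List.any_eq_true, List.mem_map] at h2 ⊢
    obtain ⟨lit, hlit, he⟩ := h2
    exact ⟨_, ⟨lit, hlit, rfl⟩, by rw [eval_toNC]; exact he⟩

end Aux2


/-- 𝓡𝓗 and 𝓗 are semantically equivalent: every Horn-NC formula is logically
equivalent to some regular Horn formula, and every regular Horn formula is itself Horn-NC
(in particular logically equivalent to a Horn-NC formula). -/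
theorem stmt7 {P T : Type} [Countable P] [LinearOrder T] :
    (∀ φ : NC P T, NC.HornNC φ →
      ∃ H : List (List (Lit P T)), HornClausal H ∧
        ∀ I : P → T, NC.eval I φ = evalClausal I H) ∧
    (∀ H : List (List (Lit P T)), HornClausal H →
      NC.HornNC (clausalToNC H) ∧
        ∀ I : P → T, NC.eval I (clausalToNC H) = evalClausal I H) := by
  exact ⟨fun φ h => ⟨NC.cl φ, cl_horn φ h, fun I => eval_cl I φ⟩,
    fun H h => ⟨hornNC_clausalToNC H h, fun I => eval_clausalToNC I H⟩⟩
end
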